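/- Let X be an n×n real symmetric matrix whose eigenvalues, ordered by decreasing absolute value, are λ_1, λ_2, …, λ_n with |λ_1| ≥ |λ_2| ≥ … ≥ |λ_n|. Then for every k < n, the best rank-k Frobenius-norm approximation error of X satisfies: for every n×n real matrix B of rank at most k, ‖X − B‖_F ≥ √(Σ_{j=k+1}^{n} |λ_j|²), and this bound is attained by the truncated eigen-decomposition X_k = Σ_{j=1}^{k} λ_j u_j u_jᵀ, where u_1,…,u_n is an orthonormal eigenbasis of X ordered so that X u_j = λ_j u_j; i.e., ‖X − X_k‖_F = √(Σ_{j=k+1}^{n} |λ_j|²). -/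

import Mathlib

open Matrix

noncomputable def frobNorm {m n : ℕ} (X : Matrix (Fin m) (Fin n) ℝ) : ℝ :=
  Real.sqrt (∑ i, ∑ j, X i j ^ 2)

/-!
If `rank B ≤ k`, the kernel of `B` contains orthonormal vectors `v₁, …, v_{n-k}`. Applying
Bessel's inequality to each row of `X - B` gives `‖X - B‖_F² ≥ ∑ᵢ ‖(X - B) vᵢ‖² = ∑ᵢ ‖X vᵢ‖²`, and
expanding in the eigenbasis, `∑ᵢ ‖X vᵢ‖² = ∑ⱼ λⱼ² qⱼ` with `qⱼ = ∑ᵢ ⟨uⱼ, vᵢ⟩² ∈ [0, 1]` and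
`∑ⱼ qⱼ ≥ n - k`. As `λⱼ²` decreases in `j`, such a weighted sum is at least `∑_{j ≥ k} λⱼ²`.
For the truncation, `X - X_k` sends `uⱼ` to `0` for `j < k` and to `λⱼ uⱼ` for `j ≥ k`, and by
Parseval the Frobenius norm can be computed on the basis `u`.
-/

open WithLp Finset

section Orthonormal

variable {ι m l : Type*} [Fintype m] [Fintype l] {v : ι → m → ℝ}

theorem dotProduct_self_eq_sum_sq (x : m → ℝ) : x ⬝ᵥ x = ∑ a, x a ^ 2 := by
  simp only [dotProduct, sq]

theorem norm_toLp_sq (x : m → ℝ) : ‖(toLp 2 x : EuclideanSpace ℝ m)‖ ^ 2 = x ⬝ᵥ x := by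
  rw [← real_inner_self_eq_norm_sq, EuclideanSpace.inner_toLp_toLp, star_trivial]

theorem sum_mulVec_dotProduct_self_eq_sum_rows (s : Finset ι) (M : Matrix l m ℝ) :
    ∑ i ∈ s, M *ᵥ v i ⬝ᵥ M *ᵥ v i = ∑ a, ∑ i ∈ s, (v i ⬝ᵥ fun b => M a b) ^ 2 := by
  simp only [dotProduct_self_eq_sum_sq, mulVec, dotProduct_comm (v _)]
  exact sum_comm

variable [DecidableEq ι]

theorem orthonormal_toLp_of_dotProduct (hv : ∀ i j, v i ⬝ᵥ v j = if i = j then 1 else 0) :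
    Orthonormal ℝ (fun i => (toLp 2 (v i) : EuclideanSpace ℝ m)) := by
  simp [orthonormal_iff_ite, EuclideanSpace.inner_toLp_toLp, dotProduct_comm, hv]

theorem sum_sq_dotProduct_le_of_orthonormal (hv : ∀ i j, v i ⬝ᵥ v j = if i = j then 1 else 0)
    (s : Finset ι) (x : m → ℝ) : ∑ i ∈ s, (v i ⬝ᵥ x) ^ 2 ≤ x ⬝ᵥ x := by
  have h := (orthonormal_toLp_of_dotProduct hv).sum_inner_products_le
    (toLp 2 x : EuclideanSpace ℝ m) (s := s)
  rw [norm_toLp_sq] at h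
  simpa [EuclideanSpace.inner_toLp_toLp, dotProduct_comm] using h

theorem sum_sq_dotProduct_eq_of_orthonormal [Fintype ι]
    (hv : ∀ i j, v i ⬝ᵥ v j = if i = j then 1 else 0)
    (hcard : Fintype.card ι = Fintype.card m) (x : m → ℝ) :
    ∑ i, (v i ⬝ᵥ x) ^ 2 = x ⬝ᵥ x := by
  have hv' := orthonormal_toLp_of_dotProduct hv
  have hspan := hv'.linearIndependent.span_eq_top_of_card_eq_finrank'
    (hcard.trans finrank_euclideanSpace.symm)
  have h := (OrthonormalBasis.mk hv' hspan.ge).sum_sq_inner_right (toLp 2 x : EuclideanSpace ℝ m)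
  rw [norm_toLp_sq] at h
  simpa [EuclideanSpace.inner_toLp_toLp, dotProduct_comm] using h

theorem sum_mulVec_dotProduct_le_of_orthonormal
    (hv : ∀ i j, v i ⬝ᵥ v j = if i = j then 1 else 0) (s : Finset ι) (M : Matrix l m ℝ) :
    ∑ i ∈ s, M *ᵥ v i ⬝ᵥ M *ᵥ v i ≤ ∑ a, ∑ b, M a b ^ 2 := by
  rw [sum_mulVec_dotProduct_self_eq_sum_rows]
  gcongr with a
  simpa only [dotProduct_self_eq_sum_sq] using
    sum_sq_dotProduct_le_of_orthonormal hv s fun b => M a b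

theorem sum_mulVec_dotProduct_eq_of_orthonormal [Fintype ι]
    (hv : ∀ i j, v i ⬝ᵥ v j = if i = j then 1 else 0) (hcard : Fintype.card ι = Fintype.card m)
    (M : Matrix l m ℝ) :
    ∑ i, M *ᵥ v i ⬝ᵥ M *ᵥ v i = ∑ a, ∑ b, M a b ^ 2 := by
  rw [sum_mulVec_dotProduct_self_eq_sum_rows]
  refine sum_congr rfl fun a _ => ?_
  simpa only [dotProduct_self_eq_sum_sq] using
    sum_sq_dotProduct_eq_of_orthonormal hv hcard fun b => M a b

theorem sum_smul_vecMulVec_mulVec_of_orthonormal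
    (hv : ∀ i j, v i ⬝ᵥ v j = if i = j then 1 else 0) (c : ι → ℝ) (s : Finset ι) (i : ι) :
    (∑ j ∈ s, c j • vecMulVec (v j) (v j)) *ᵥ v i = if i ∈ s then c i • v i else 0 := by
  simp [sum_mulVec, smul_mulVec, vecMulVec_mulVec, hv]

theorem sum_sq_sub_sum_smul_vecMulVec [Fintype ι]
    (hv : ∀ i j, v i ⬝ᵥ v j = if i = j then 1 else 0) (hcard : Fintype.card ι = Fintype.card m)
    {X : Matrix m m ℝ} {c : ι → ℝ} (heig : ∀ i, X *ᵥ v i = c i • v i) (s : Finset ι) :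
    ∑ a, ∑ b, (X - ∑ j ∈ s, c j • vecMulVec (v j) (v j)) a b ^ 2 = ∑ j ∈ sᶜ, c j ^ 2 := by
  have hres : ∀ i, (X - ∑ j ∈ s, c j • vecMulVec (v j) (v j)) *ᵥ v i
      = if i ∈ s then 0 else c i • v i := by
    intro i
    split_ifs with hi <;> simp [sub_mulVec, heig, sum_smul_vecMulVec_mulVec_of_orthonormal hv, hi]
  rw [← sum_mulVec_dotProduct_eq_of_orthonormal hv hcard, ← sum_add_sum_compl s,
    sum_eq_zero fun i hi => by simp [hres, hi], zero_add]
  refine sum_congr rfl fun i hi => ?_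
  simp [hres, mem_compl.mp hi, hv, sq]

end Orthonormal

theorem exists_orthonormal_mulVec_eq_zero {l n : Type*} [Fintype n] (B : Matrix l n ℝ) :
    ∃ v : Fin (Fintype.card n - B.rank) → n → ℝ,
      (∀ i j, v i ⬝ᵥ v j = if i = j then 1 else 0) ∧ ∀ i, B *ᵥ v i = 0 := by
  let K : Submodule ℝ (EuclideanSpace ℝ n) :=
    (LinearMap.ker B.mulVecLin).map (EuclideanSpace.equiv n ℝ).symm.toLinearEquiv.toLinearMap
  have hK : Module.finrank ℝ K = Fintype.card n - B.rank := by
    have := B.mulVecLin.finrank_range_add_finrank_ker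
    rw [Module.finrank_fintype_fun_eq_card] at this
    rw [LinearEquiv.finrank_map_eq, Matrix.rank]
    omega
  let b := (stdOrthonormalBasis ℝ K).reindex (finCongr hK)
  refine ⟨fun i => ofLp (b i : EuclideanSpace ℝ n), fun i j => ?_, fun i => ?_⟩
  · simpa [Submodule.coe_inner, EuclideanSpace.inner_eq_star_dotProduct, dotProduct_comm]
      using orthonormal_iff_ite.mp b.orthonormal i j
  · obtain ⟨x, hx, hbx⟩ := Submodule.mem_map.mp (b i).2
    simp only [← hbx]
    exact hx

theorem sum_Ici_le_sum_mul_of_antitone {ι : Type*} [Fintype ι] [LinearOrder ι]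
    [LocallyFiniteOrderTop ι] {a q : ι → ℝ} (ha : Antitone a) (κ : ι) (hκ : 0 ≤ a κ)
    (hq0 : ∀ j, 0 ≤ q j) (hq1 : ∀ j, q j ≤ 1) (hcard : (#(Ici κ) : ℝ) ≤ ∑ j, q j) :
    ∑ j ∈ Ici κ, a j ≤ ∑ j, a j * q j := by
  have hpoint : ∀ j, (if j ∈ Ici κ then a j else 0)
      ≤ a j * q j + a κ * ((if j ∈ Ici κ then 1 else 0) - q j) := by
    intro j
    by_cases hj : κ ≤ j
    · simp only [mem_Ici, hj, if_true]
      nlinarith [ha hj, hq1 j]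
    · simp only [mem_Ici, hj, if_false]
      nlinarith [ha (not_le.mp hj).le, hq0 j]
  calc ∑ j ∈ Ici κ, a j = ∑ j, if j ∈ Ici κ then a j else 0 := by
        rw [sum_ite_mem, univ_inter]
    _ ≤ ∑ j, (a j * q j + a κ * ((if j ∈ Ici κ then 1 else 0) - q j)) :=
        sum_le_sum fun j _ => hpoint j
    _ = ∑ j, a j * q j + a κ * (#(Ici κ) - ∑ j, q j) := by
        rw [sum_add_distrib, ← mul_sum, sum_sub_distrib, sum_boole, filter_mem_eq_inter,
          univ_inter]
    _ ≤ ∑ j, a j * q j := by nlinarith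

theorem Matrix.IsSymm.dotProduct_mulVec_of_mulVec_eq_smul {R n : Type*} [CommSemiring R]
    [Fintype n] {X : Matrix n n R} (hX : X.IsSymm) {w : n → R} {μ : R} (hw : X *ᵥ w = μ • w)
    (x : n → R) : w ⬝ᵥ X *ᵥ x = μ * (w ⬝ᵥ x) := by
  rw [dotProduct_mulVec, ← mulVec_transpose, hX.eq, hw, smul_dotProduct, smul_eq_mul]

section Eigenbasis

variable {n : ℕ} {X : Matrix (Fin n) (Fin n) ℝ} {lam : Fin n → ℝ} {u : Fin n → Fin n → ℝ}

theorem mulVec_dotProduct_self_eq_sum_eigenvalues (hX : X.IsSymm)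
    (hu : ∀ i j, u i ⬝ᵥ u j = if i = j then 1 else 0) (heig : ∀ j, X *ᵥ u j = lam j • u j)
    (x : Fin n → ℝ) : X *ᵥ x ⬝ᵥ X *ᵥ x = ∑ j, lam j ^ 2 * (u j ⬝ᵥ x) ^ 2 := by
  rw [← sum_sq_dotProduct_eq_of_orthonormal hu rfl]
  simp only [hX.dotProduct_mulVec_of_mulVec_eq_smul (heig _), mul_pow]

theorem sum_Ici_sq_abs_le_sum_mulVec_dotProduct (hX : X.IsSymm)
    (hord : Antitone fun i => |lam i|) (hu : ∀ i j, u i ⬝ᵥ u j = if i = j then 1 else 0)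
    (heig : ∀ j, X *ᵥ u j = lam j • u j) {ι : Type*} [Fintype ι] [DecidableEq ι]
    {v : ι → Fin n → ℝ} (hv : ∀ i j, v i ⬝ᵥ v j = if i = j then 1 else 0) (κ : Fin n)
    (hcard : #(Ici κ) ≤ Fintype.card ι) :
    ∑ j ∈ Ici κ, |lam j| ^ 2 ≤ ∑ i, X *ᵥ v i ⬝ᵥ X *ᵥ v i := by
  set q : Fin n → ℝ := fun j => ∑ i, (v i ⬝ᵥ u j) ^ 2
  have hq1 : ∀ j, q j ≤ 1 := fun j =>
    (sum_sq_dotProduct_le_of_orthonormal hv univ (u j)).trans_eq (by simp [hu])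
  have hq_sum : ∑ j, q j = Fintype.card ι := by
    simp only [q]
    rw [sum_comm]
    simp [dotProduct_comm (v _), sum_sq_dotProduct_eq_of_orthonormal hu rfl, hv]
  calc ∑ j ∈ Ici κ, |lam j| ^ 2 ≤ ∑ j, |lam j| ^ 2 * q j := by
        refine sum_Ici_le_sum_mul_of_antitone (fun i j hij => ?_) κ (by positivity)
          (fun j => by positivity) hq1 (by rw [hq_sum]; exact_mod_cast hcard)
        exact pow_le_pow_left₀ (abs_nonneg _) (hord hij) 2
    _ = ∑ i, X *ᵥ v i ⬝ᵥ X *ᵥ v i := by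
        simp only [q, mul_sum, sq_abs, mulVec_dotProduct_self_eq_sum_eigenvalues hX hu heig,
          dotProduct_comm (v _)]
        exact sum_comm

end Eigenbasis

theorem best_rank_k_symmetric_truncated_eig_general {n k : ℕ} (hk : k < n)
    (X : Matrix (Fin n) (Fin n) ℝ) (hX : X.IsHermitian)
    (lam : Fin n → ℝ)
    (hord : Antitone fun i => |lam i|)
    (u : Fin n → Fin n → ℝ)
    (hortho : ∀ i j, u i ⬝ᵥ u j = if i = j then (1 : ℝ) else 0)
    (heig : ∀ j, X *ᵥ u j = lam j • u j) :
    (∀ B : Matrix (Fin n) (Fin n) ℝ, B.rank ≤ k →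
      Real.sqrt (∑ j ∈ Finset.Ici (⟨k, hk⟩ : Fin n), |lam j| ^ 2) ≤ frobNorm (X - B)) ∧
    frobNorm (X - ∑ j ∈ Finset.Iio (⟨k, hk⟩ : Fin n), lam j • Matrix.vecMulVec (u j) (u j)) =
      Real.sqrt (∑ j ∈ Finset.Ici (⟨k, hk⟩ : Fin n), |lam j| ^ 2) := by
  refine ⟨fun B hB => ?_, ?_⟩
  · obtain ⟨v, hv, hBv⟩ := exists_orthonormal_mulVec_eq_zero B
    unfold frobNorm
    gcongr
    calc _ ≤ ∑ i, X *ᵥ v i ⬝ᵥ X *ᵥ v i :=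
          sum_Ici_sq_abs_le_sum_mulVec_dotProduct (isHermitian_iff_isSymm.mp hX) hord hortho
            heig hv _ (by simp only [Fin.card_Ici, Fintype.card_fin]; omega)
      _ = ∑ i, (X - B) *ᵥ v i ⬝ᵥ (X - B) *ᵥ v i := by simp [sub_mulVec, hBv]
      _ ≤ _ := sum_mulVec_dotProduct_le_of_orthonormal hv univ (X - B)
  · have hcompl : (Iio (⟨k, hk⟩ : Fin n))ᶜ = Ici ⟨k, hk⟩ := by ext; simp
    unfold frobNorm
    simp only [sum_sq_sub_sum_smul_vecMulVec hortho rfl heig, hcompl, sq_abs]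

/-- for symmetric `X` with eigenvalues ordered by decreasing absolute
value, every rank-`≤ k` matrix `B` satisfies `‖X − B‖_F ≥ √(Σ_{j>k} |λⱼ|²)`, and the
bound is attained by the truncated eigen-decomposition `X_k = Σ_{j≤k} λⱼ uⱼ uⱼᵀ`.
(Indices are 0-based: the first `k` indices form `X_k`, the tail is `j ≥ k`.) -/
theorem best_rank_k_symmetric_truncated_eig {n k : ℕ} (hk : k < n)
    (X : Matrix (Fin n) (Fin n) ℝ) (hX : X.IsHermitian)
    (lam : Fin n → ℝ) (e : Fin n ≃ Fin n)
    (hlam : ∀ i, lam i = hX.eigenvalues (e i))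
    (hord : Antitone fun i => |lam i|)
    (u : Fin n → Fin n → ℝ)
    (hortho : ∀ i j, u i ⬝ᵥ u j = if i = j then (1 : ℝ) else 0)
    (heig : ∀ j, X *ᵥ u j = lam j • u j) :
    (∀ B : Matrix (Fin n) (Fin n) ℝ, B.rank ≤ k →
      Real.sqrt (∑ j ∈ Finset.Ici (⟨k, hk⟩ : Fin n), |lam j| ^ 2) ≤ frobNorm (X - B)) ∧
    frobNorm (X - ∑ j ∈ Finset.Iio (⟨k, hk⟩ : Fin n), lam j • Matrix.vecMulVec (u j) (u j)) =
      Real.sqrt (∑ j ∈ Finset.Ici (⟨k, hk⟩ : Fin n), |lam j| ^ 2) :=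
  best_rank_k_symmetric_truncated_eig_general hk X hX lam hord u hortho heig
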